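/- Let d ≥ 2, T > 0, and x_1, y_1 ∈ ℝ^d with x_1 ≠ y_1. Let b ∈ ℝ satisfy x_1^{(1)} + b > 0 and y_1^{(1)} + b > 0. Then there exists a unique w ∈ ℝ^d such that the solution of the Cauchy problem ẋ(t) = w · max(x^{(1)}(t) + b, 0), x(0) = x_1, satisfies x(T) = y_1. -/

import Mathlib

open Set

noncomputable section

/-!
Along a solution of `ẋ = max (ℓ x + b) 0 • w` the scalar `u = ℓ x + b` solves `u' = (ℓ w) u` as
long as it is positive, so starting from `u(0) > 0` it is `u(0) e^{(ℓ w) t}` forever: the ReLU never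
switches off and the trajectory is the ray `x₀ + s(t) • w` with `s(t) = u(0) ∫₀ᵗ e^{(ℓ w) τ} dτ`.
Reaching `y` at time `T` forces `u(T) = ℓ y + b`, which fixes `ℓ w`, hence `s(T) > 0`, hence
`w = s(T)⁻¹ • (y - x₀)`; conversely this `w` has the right value of `ℓ w`.
-/

/-- The closed form of `∫ τ in 0..t, exp (k * τ)`. -/
def integralExpMul (k t : ℝ) : ℝ := if k = 0 then t else (Real.exp (k * t) - 1) / k

lemma integralExpMul_zero_right (k : ℝ) : integralExpMul k 0 = 0 := by
  simp [integralExpMul]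

lemma one_add_mul_integralExpMul (k t : ℝ) : 1 + k * integralExpMul k t = Real.exp (k * t) := by
  unfold integralExpMul
  split_ifs with hk
  · simp [hk]
  · field_simp
    ring

lemma hasDerivAt_integralExpMul (k t : ℝ) :
    HasDerivAt (integralExpMul k) (Real.exp (k * t)) t := by
  unfold integralExpMul
  split_ifs with hk
  · simpa [hk] using hasDerivAt_id' t
  · have h : HasDerivAt (fun t => (Real.exp (k * t) - 1) / k) (Real.exp (k * t) * k / k) t := by
      simpa using (((hasDerivAt_id' t).const_mul k).exp.sub_const 1).div_const k
    rwa [mul_div_cancel_right₀ _ hk] at h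

lemma integralExpMul_pos (k : ℝ) {t : ℝ} (ht : 0 < t) : 0 < integralExpMul k t := by
  have hmono : StrictMono (integralExpMul k) :=
    strictMono_of_hasDerivAt_pos (hasDerivAt_integralExpMul k) fun _ => Real.exp_pos _
  simpa [integralExpMul_zero_right] using hmono ht

section ReluFlow

variable {E : Type*} [NormedAddCommGroup E] [NormedSpace ℝ E] (ℓ : StrongDual ℝ E) (b : ℝ)

lemma lipschitzWith_max_smul (w : E) :
    LipschitzWith (‖ℓ‖₊ * ‖w‖₊) fun x => max (ℓ x + b) 0 • w := by
  refine LipschitzWith.of_dist_le_mul fun x y => ?_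
  rw [dist_eq_norm, dist_eq_norm, ← sub_smul, norm_smul, Real.norm_eq_abs, mul_comm]
  have hmax : |max (ℓ x + b) 0 - max (ℓ y + b) 0| ≤ ‖ℓ‖ * ‖x - y‖ := calc
    _ ≤ |(ℓ x + b) - (ℓ y + b)| := abs_max_sub_max_le_abs _ _ _
    _ = ‖ℓ (x - y)‖ := by rw [map_sub, Real.norm_eq_abs, add_sub_add_right_eq_sub]
    _ ≤ ‖ℓ‖ * ‖x - y‖ := ℓ.le_opNorm _
  push_cast
  calc ‖w‖ * |max (ℓ x + b) 0 - max (ℓ y + b) 0| ≤ ‖w‖ * (‖ℓ‖ * ‖x - y‖) := by gcongr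
    _ = _ := by ring

def reluFlow (x₀ w : E) (t : ℝ) : E := x₀ + ((ℓ x₀ + b) * integralExpMul (ℓ w) t) • w

variable {ℓ b}

lemma apply_reluFlow_add (x₀ w : E) (t : ℝ) :
    ℓ (reluFlow ℓ b x₀ w t) + b = (ℓ x₀ + b) * Real.exp (ℓ w * t) := by
  rw [reluFlow, map_add, map_smul, smul_eq_mul, ← one_add_mul_integralExpMul]
  ring

lemma hasDerivAt_reluFlow {x₀ : E} (hx₀ : 0 < ℓ x₀ + b) (w : E) (t : ℝ) :
    HasDerivAt (reluFlow ℓ b x₀ w) (max (ℓ (reluFlow ℓ b x₀ w t) + b) 0 • w) t := by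
  rw [apply_reluFlow_add, max_eq_left (by positivity)]
  exact (((hasDerivAt_integralExpMul (ℓ w) t).const_mul _).smul_const w).const_add x₀

lemma eqOn_reluFlow {x₀ : E} (hx₀ : 0 < ℓ x₀ + b) {w : E} {T : ℝ} {γ : ℝ → E}
    (hγ₀ : γ 0 = x₀)
    (hγ : ∀ t ∈ Icc 0 T, HasDerivWithinAt γ (max (ℓ (γ t) + b) 0 • w) (Icc 0 T) t) :
    EqOn γ (reluFlow ℓ b x₀ w) (Icc 0 T) := by
  have hflow := hasDerivAt_reluFlow hx₀ w
  refine ODE_solution_unique (v := fun _ x => max (ℓ x + b) 0 • w)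
    (fun _ => lipschitzWith_max_smul ℓ b w) (fun t ht => (hγ t ht).continuousWithinAt)
    (fun t ht => (hγ t (Ico_subset_Icc_self ht)).mono_of_mem_nhdsWithin
      (Icc_mem_nhdsGE_of_mem ht))
    (fun t _ => (hflow t).continuousAt.continuousWithinAt) (fun t _ => (hflow t).hasDerivWithinAt)
    ?_
  simp [reluFlow, integralExpMul_zero_right, hγ₀]

lemma reluFlow_injective {x₀ : E} (hx₀ : 0 < ℓ x₀ + b) {T : ℝ} (hT : 0 < T) :
    Function.Injective fun w => reluFlow ℓ b x₀ w T := by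
  intro w w' h
  have hrate : ℓ w = ℓ w' := by
    have := congrArg (ℓ · + b) h
    simp only [apply_reluFlow_add, mul_right_inj' hx₀.ne', Real.exp_eq_exp] at this
    exact mul_right_cancel₀ hT.ne' this
  have hscale : 0 < (ℓ x₀ + b) * integralExpMul (ℓ w) T := mul_pos hx₀ (integralExpMul_pos _ hT)
  simp only [reluFlow, ← hrate, add_right_inj] at h
  exact smul_right_injective E hscale.ne' h

lemma exists_reluFlow_eq {x₀ y : E} (hx₀ : 0 < ℓ x₀ + b) (hy : 0 < ℓ y + b) {T : ℝ}
    (hT : 0 < T) : ∃ w, reluFlow ℓ b x₀ w T = y := by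
  set k := Real.log ((ℓ y + b) / (ℓ x₀ + b)) / T
  have hk : (ℓ x₀ + b) * Real.exp (k * T) = ℓ y + b := by
    rw [div_mul_cancel₀ _ hT.ne', Real.exp_log (div_pos hy hx₀), mul_div_cancel₀ _ hx₀.ne']
  set S := (ℓ x₀ + b) * integralExpMul k T
  have hS : 0 < S := mul_pos hx₀ (integralExpMul_pos _ hT)
  have hrate : ℓ (S⁻¹ • (y - x₀)) = k := by
    have : ℓ y - ℓ x₀ = S * k := by
      rw [← one_add_mul_integralExpMul] at hk
      linear_combination -hk
    rw [map_smul, map_sub, this, smul_eq_mul, inv_mul_cancel_left₀ hS.ne']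
  refine ⟨S⁻¹ • (y - x₀), ?_⟩
  rw [reluFlow, hrate, smul_smul, mul_inv_cancel₀ hS.ne', one_smul, add_sub_cancel]

theorem existsUnique_reluControl {x₀ y : E} (hx₀ : 0 < ℓ x₀ + b) (hy : 0 < ℓ y + b)
    {T : ℝ} (hT : 0 < T) :
    ∃! w : E, ∃ γ : ℝ → E, γ 0 = x₀ ∧ γ T = y ∧
      ∀ t ∈ Icc 0 T, HasDerivWithinAt γ (max (ℓ (γ t) + b) 0 • w) (Icc 0 T) t := by
  obtain ⟨w, hw⟩ := exists_reluFlow_eq hx₀ hy hT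
  refine ⟨w, ⟨reluFlow ℓ b x₀ w, by simp [reluFlow, integralExpMul_zero_right], hw,
    fun t _ => (hasDerivAt_reluFlow hx₀ w t).hasDerivWithinAt⟩, ?_⟩
  rintro w' ⟨γ, hγ₀, hγT, hγ⟩
  refine reluFlow_injective hx₀ hT (show reluFlow ℓ b x₀ w' T = reluFlow ℓ b x₀ w T from ?_)
  rw [← eqOn_reluFlow hx₀ hγ₀ hγ (right_mem_Icc.mpr hT.le), hγT, hw]

end ReluFlow

/-- One-neuron exact control of a single point: there is a unique velocity `w`
such that the solution of `ẋ = w·max(x⁽¹⁾ + b, 0)`, `x(0) = x₁`, reaches `y₁`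
at time `T`. -/
theorem statement7 (d : ℕ) (hd : 2 ≤ d) (T : ℝ) (hT : 0 < T)
    (x₁ y₁ : EuclideanSpace ℝ (Fin d)) (b : ℝ)
    (hx : x₁ ⟨0, by omega⟩ + b > 0) (hy : y₁ ⟨0, by omega⟩ + b > 0) :
    ∃! w : EuclideanSpace ℝ (Fin d),
      ∃ γ : ℝ → EuclideanSpace ℝ (Fin d),
        γ 0 = x₁ ∧ γ T = y₁ ∧
        ∀ t ∈ Set.Icc (0 : ℝ) T,
          HasDerivWithinAt γ (max (γ t ⟨0, by omega⟩ + b) 0 • w)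
            (Set.Icc (0 : ℝ) T) t :=
  existsUnique_reluControl (ℓ := EuclideanSpace.proj (⟨0, by omega⟩ : Fin d)) hx hy hT
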